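/- arXiv:2210.01793 — 4 statements merged into one kernel-verified Lean document; each statement's English description precedes it below -/
import Mathlib

section
/- For an integer n ≥ 2 and integers k_1, …, k_n ≥ 3, let b = lcm(k_1−1, …, k_n−1). Then the class of the divisor δ in the critical group K(H_{k_1−1,…,k_n−1}) has additive order exactly b + ∑_{i=1}^n b/(k_i−1). -/
/-- Vertex set of the hinge graph `H_{k₁-1,…,kₙ-1}` with base cycles of lengths `k i`:
two shared vertices `u, w` (encoded as `Sum.inl 0`, `Sum.inl 1`) together with the vertices
`v_{i,j}` (encoded as `Sum.inr ⟨i, j⟩`, zero-indexed, `j < k i - 2`). -/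
abbrev GHingeVertex (n : ℕ) (k : Fin n → ℕ) : Type := Fin 2 ⊕ (Σ i : Fin n, Fin (k i - 2))

/-- The shared vertex `u`. -/
def gu (n : ℕ) (k : Fin n → ℕ) : GHingeVertex n k := Sum.inl 0

/-- The shared vertex `w`. -/
def gw (n : ℕ) (k : Fin n → ℕ) : GHingeVertex n k := Sum.inl 1

/-- The vertex `v_{i+1,j+1}` of the `i+1`-st cycle (zero-indexed here). -/
def gv (n : ℕ) (k : Fin n → ℕ) (i : Fin n) (j : Fin (k i - 2)) : GHingeVertex n k :=
  Sum.inr ⟨i, j⟩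

/-- The base (Boolean) edge relation of the hinge graph: `u-w`, `u-v_{i,1}`,
`v_{i,j}-v_{i,j+1}`, `v_{i,k_i-2}-w`. -/
def gHingeRelB (n : ℕ) (k : Fin n → ℕ) : GHingeVertex n k → GHingeVertex n k → Bool
  | Sum.inl a, Sum.inl b => a != b
  | Sum.inl a, Sum.inr p => a == 0 && p.2.val == 0
  | Sum.inr p, Sum.inl b => b == 1 && p.2.val == k p.1 - 3
  | Sum.inr p, Sum.inr q => p.1 == q.1 && q.2.val == p.2.val + 1

/-- The hinge graph `H_{k₁-1,…,kₙ-1}`: cycles of lengths `k 1, …, k n` glued along the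
common edge `{u, w}`. -/
def GHinge (n : ℕ) (k : Fin n → ℕ) : SimpleGraph (GHingeVertex n k) :=
  SimpleGraph.fromRel (fun x y => gHingeRelB n k x y = true)

instance (n : ℕ) (k : Fin n → ℕ) : DecidableRel (GHinge n k).Adj := fun x y =>
  inferInstanceAs (Decidable (x ≠ y ∧ (gHingeRelB n k x y = true ∨ gHingeRelB n k y x = true)))

/-- The number of spanning trees of a graph `G`: the number of edge sets `s ⊆ E(G)`
whose associated spanning subgraph (on all of `V`) is connected and acyclic. -/
noncomputable def spanningTreeCount {V : Type*} (G : SimpleGraph V) : ℕ :=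
  Set.ncard {s : Set (Sym2 V) | s ⊆ G.edgeSet ∧ (SimpleGraph.fromEdgeSet s).IsTree}

/-- The degree homomorphism on divisors. -/
def degHom (V : Type*) [Fintype V] : (V → ℤ) →+ ℤ where
  toFun D := ∑ v, D v
  map_zero' := by simp
  map_add' x y := by simp [Finset.sum_add_distrib]

/-- The group `Div⁰` of degree-zero divisors. -/
def Div0 (V : Type*) [Fintype V] : AddSubgroup (V → ℤ) := (degHom V).ker

/-- The group of principal divisors: the image of the Laplacian `L = Deg - A`. -/
def Prin {V : Type*} [Fintype V] [DecidableEq V] (G : SimpleGraph V) [DecidableRel G.Adj] :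
    AddSubgroup (V → ℤ) :=
  AddMonoidHom.range (Matrix.mulVecLin (G.lapMatrix ℤ)).toAddMonoidHom

/-- The critical group `K(G) = Div⁰(G) / Prin(G)`. -/
def CriticalGroup {V : Type*} [Fintype V] [DecidableEq V] (G : SimpleGraph V)
    [DecidableRel G.Adj] : Type _ :=
  Div0 V ⧸ ((Prin G).addSubgroupOf (Div0 V))

noncomputable instance {V : Type*} [Fintype V] [DecidableEq V] (G : SimpleGraph V)
    [DecidableRel G.Adj] : AddCommGroup (CriticalGroup G) :=
  inferInstanceAs (AddCommGroup (Div0 V ⧸ ((Prin G).addSubgroupOf (Div0 V))))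

/-- The class of a degree-zero divisor in the critical group. -/
def divisorClass {V : Type*} [Fintype V] [DecidableEq V] (G : SimpleGraph V)
    [DecidableRel G.Adj] (D : V → ℤ) (hD : D ∈ Div0 V) : CriticalGroup G :=
  (QuotientAddGroup.mk (⟨D, hD⟩ : Div0 V) :
    Div0 V ⧸ ((Prin G).addSubgroupOf (Div0 V)))

/-- The divisor with value `1` at `x`, `-1` at `y` (for `x ≠ y`) and `0` elsewhere. -/
def pointDiff {V : Type*} [DecidableEq V] (x y : V) : V → ℤ :=
  fun z => (if z = x then 1 else 0) - (if z = y then 1 else 0)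

lemma pointDiff_mem {V : Type*} [Fintype V] [DecidableEq V] (x y : V) :
    pointDiff x y ∈ Div0 V := by
  simp [Div0, AddMonoidHom.mem_ker, degHom, pointDiff, Finset.sum_sub_distrib]

/-!
A potential `x` with `L x = m • δ` is harmonic at the inner vertices, so it is affine along each
of the `n` paths from `u` to `w`: it drops by the same amount `dᵢ` across each of the `kᵢ - 1`
edges of the `i`-th path, whence `(kᵢ - 1) dᵢ = x u - x w`. Hence `x u - x w = s b` for some
integer `s`, `dᵢ = s b / (kᵢ - 1)`, and the equation at `u` reads
`m = (x u - x w) + ∑ dᵢ = s (b + ∑ b / (kᵢ - 1))`. Conversely, the potential with these slopes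
for `s = 1` realises `m = b + ∑ b / (kᵢ - 1)`.
-/

open Matrix

section CriticalGroup

variable {V : Type*} [Fintype V] [DecidableEq V] (G : SimpleGraph V) [DecidableRel G.Adj]

theorem nsmul_divisorClass_eq_zero_iff {D : V → ℤ} (hD : D ∈ Div0 V) (m : ℕ) :
    m • divisorClass G D hD = 0 ↔ ∃ x, G.lapMatrix ℤ *ᵥ x = (m : ℤ) • D := by
  change m • (QuotientAddGroup.mk ⟨D, hD⟩ : Div0 V ⧸ (Prin G).addSubgroupOf (Div0 V)) = 0 ↔ _
  rw [← QuotientAddGroup.mk_nsmul, QuotientAddGroup.eq_zero_iff,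
    AddSubgroup.mem_addSubgroupOf, AddSubgroup.coe_nsmul, natCast_zsmul]
  rfl

theorem SimpleGraph.lapMatrix_mulVec_apply_eq_sum {R : Type*} [NonAssocRing R] (x : V → R)
    (v : V) :
    (G.lapMatrix R *ᵥ x) v = ∑ y ∈ G.neighborFinset v, (x v - x y) := by
  rw [G.lapMatrix_mulVec_apply, Finset.sum_sub_distrib, Finset.sum_const,
    G.card_neighborFinset_eq_degree, nsmul_eq_mul]

end CriticalGroup

theorem eq_add_nsmul_of_sub_eq_sub {M : Type*} [AddCommGroup M] {f : ℕ → M} {N : ℕ}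
    (h : ∀ t, t + 2 ≤ N → f (t + 2) - f (t + 1) = f (t + 1) - f t) :
    ∀ t ≤ N, f t = f 0 + t • (f 1 - f 0) := by
  have step : ∀ t, t + 1 ≤ N → f (t + 1) - f t = f 1 - f 0 := by
    intro t
    induction t with
    | zero => simp
    | succ t ih => intro ht; rw [h t ht, ih (by omega)]
  intro t
  induction t with
  | zero => simp
  | succ t ih =>
    intro ht
    rw [succ_nsmul, ← add_assoc, ← ih (by omega), ← step t ht]
    abel

open Finset in
theorem lcm_add_sum_lcm_div_dvd {ι : Type*} [Fintype ι] {a : ι → ℕ} (ha : ∀ i, a i ≠ 0)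
    {t : ℤ} {d : ι → ℤ} (h : ∀ i, (a i : ℤ) * d i = t) :
    ((univ.lcm a + ∑ i, univ.lcm a / a i : ℕ) : ℤ) ∣ t + ∑ i, d i := by
  set L := univ.lcm a
  obtain ⟨s, hs⟩ : (L : ℤ) ∣ t :=
    Int.natCast_dvd.mpr (lcm_dvd fun i _ => Int.natCast_dvd.mp ⟨d i, (h i).symm⟩)
  have hd : ∀ i, d i = (L / a i : ℕ) * s := fun i => by
    have hL : (a i : ℤ) * (L / a i : ℕ) = L := by
      exact_mod_cast Nat.mul_div_cancel' (dvd_lcm (mem_univ i))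
    apply mul_left_cancel₀ (Nat.cast_ne_zero.mpr (ha i))
    rw [h i, ← mul_assoc, hL, hs]
  refine ⟨s, ?_⟩
  rw [hs, sum_congr rfl fun i _ => hd i, ← sum_mul]
  push_cast
  ring

namespace GHinge

variable {n : ℕ} {k : Fin n → ℕ}

open SimpleGraph

@[elab_as_elim]
theorem vertex_induction {motive : GHingeVertex n k → Prop} (hu : motive (gu n k))
    (hw : motive (gw n k)) (hv : ∀ i j, motive (gv n k i j)) : ∀ y, motive y
  | Sum.inl 0 => hu
  | Sum.inl 1 => hw
  | Sum.inr ⟨i, j⟩ => hv i j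

@[simp] theorem gu_ne_gw : gu n k ≠ gw n k := by simp [gu, gw]
@[simp] theorem gw_ne_gu : gw n k ≠ gu n k := gu_ne_gw.symm
@[simp] theorem gv_ne_gu (i : Fin n) (j : Fin (k i - 2)) : gv n k i j ≠ gu n k := by
  simp [gu, gv]
@[simp] theorem gv_ne_gw (i : Fin n) (j : Fin (k i - 2)) : gv n k i j ≠ gw n k := by
  simp [gw, gv]

theorem gv_eq_gv_iff {i i' : Fin n} {j : Fin (k i - 2)} {j' : Fin (k i' - 2)} :
    gv n k i j = gv n k i' j' ↔ i = i' ∧ (j : ℕ) = j' := by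
  simp only [gv, Sum.inr.injEq, Sigma.mk.inj_iff]
  constructor
  · rintro ⟨rfl, h⟩
    exact ⟨rfl, by rw [eq_of_heq h]⟩
  · rintro ⟨rfl, h⟩
    exact ⟨rfl, heq_of_eq (Fin.ext h)⟩

theorem adj_gu_gw : (GHinge n k).Adj (gu n k) (gw n k) := by
  simp [GHinge, gHingeRelB, gu, gw]

theorem adj_gu_gv (i : Fin n) (j : Fin (k i - 2)) :
    (GHinge n k).Adj (gu n k) (gv n k i j) ↔ (j : ℕ) = 0 := by
  simp [GHinge, gHingeRelB, gu, gv]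

theorem adj_gw_gv (i : Fin n) (j : Fin (k i - 2)) :
    (GHinge n k).Adj (gw n k) (gv n k i j) ↔ (j : ℕ) = k i - 3 := by
  simp [GHinge, gHingeRelB, gw, gv]

theorem adj_gv_gv {i i' : Fin n} (j : Fin (k i - 2)) (j' : Fin (k i' - 2)) :
    (GHinge n k).Adj (gv n k i j) (gv n k i' j') ↔
      i = i' ∧ ((j' : ℕ) = j + 1 ∨ (j : ℕ) = j' + 1) := by
  simp only [GHinge, gHingeRelB, gv, fromRel_adj, ne_eq, Sum.inr.injEq,
    Sigma.mk.inj_iff, Bool.and_eq_true, beq_iff_eq]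
  constructor
  · rintro ⟨-, ⟨rfl, h⟩ | ⟨rfl, h⟩⟩ <;> simp [h]
  · rintro ⟨rfl, h⟩
    refine ⟨fun ⟨_, hj⟩ => ?_, by tauto⟩
    rw [eq_of_heq hj] at h
    omega

/-- Position `t` on the `i`-th `u`–`w` path: the paper's `v_{i,t}` for `0 < t < k i - 1`,
clamped to `w` beyond the end of the path. -/
def pathVertex (i : Fin n) (t : ℕ) : GHingeVertex n k :=
  if h : 0 < t ∧ t < k i - 1 then gv n k i ⟨t - 1, by omega⟩ else if t = 0 then gu n k else gw n k

variable {i : Fin n} {t : ℕ}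

theorem pathVertex_zero (i : Fin n) : pathVertex (k := k) i 0 = gu n k := by
  simp [pathVertex]

theorem pathVertex_of_le (ht : k i - 1 ≤ t) (ht₀ : 0 < t) :
    pathVertex (k := k) i t = gw n k := by
  rw [pathVertex, dif_neg (by omega), if_neg (by omega)]

theorem gv_eq_pathVertex (i : Fin n) (j : Fin (k i - 2)) :
    gv n k i j = pathVertex i (j + 1) := by
  rw [pathVertex, dif_pos (by omega)]
  rfl

theorem gu_eq_pathVertex_iff : gu n k = pathVertex i t ↔ t = 0 := by
  unfold pathVertex
  split_ifs <;> simp [Ne.symm, *]; omega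

theorem gw_eq_pathVertex_iff : gw n k = pathVertex i t ↔ 0 < t ∧ k i - 1 ≤ t := by
  unfold pathVertex
  split_ifs <;> simp [Ne.symm, *] <;> omega

theorem gv_eq_pathVertex_iff {i' : Fin n} {j : Fin (k i' - 2)} :
    gv n k i' j = pathVertex i t ↔ i' = i ∧ (j : ℕ) + 1 = t := by
  unfold pathVertex
  split_ifs with h h₀
  · simp [gv_eq_gv_iff]
    omega
  all_goals
    simp only [gv_ne_gu, gv_ne_gw, false_iff, not_and]
    rintro rfl rfl
    omega

theorem pathVertex_eq_gv (ht₀ : 0 < t) (ht : t < k i - 1) :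
    pathVertex i t = gv n k i ⟨t - 1, by omega⟩ := by
  rw [pathVertex, dif_pos ⟨ht₀, ht⟩]

theorem pathVertex_injOn (i : Fin n) :
    Set.InjOn (pathVertex (k := k) i) (Set.Iic (k i - 1)) := by
  intro s hs t ht h
  simp only [Set.mem_Iic] at hs ht
  rcases Nat.eq_zero_or_pos s with rfl | hs₀
  · rw [pathVertex_zero, gu_eq_pathVertex_iff] at h
    exact h.symm
  rcases hs.lt_or_eq with hs' | rfl
  · rw [pathVertex_eq_gv hs₀ hs', gv_eq_pathVertex_iff] at h
    have : s - 1 + 1 = t := h.2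
    omega
  · rw [pathVertex_of_le le_rfl hs₀, gw_eq_pathVertex_iff] at h
    omega

theorem neighborFinset_gv (i : Fin n) (j : Fin (k i - 2)) :
    (GHinge n k).neighborFinset (gv n k i j) = {pathVertex i j, pathVertex i (j + 2)} := by
  ext y
  have hj := j.isLt
  rw [mem_neighborFinset, Finset.mem_insert, Finset.mem_singleton]
  induction y using vertex_induction with
  | hu =>
    rw [adj_comm, adj_gu_gv, gu_eq_pathVertex_iff, gu_eq_pathVertex_iff]
    omega
  | hw =>
    rw [adj_comm, adj_gw_gv, gw_eq_pathVertex_iff, gw_eq_pathVertex_iff]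
    omega
  | hv i' j' =>
    rw [adj_gv_gv, gv_eq_pathVertex_iff, gv_eq_pathVertex_iff]
    constructor
    · rintro ⟨rfl, h⟩
      omega
    · rintro (⟨rfl, h⟩ | ⟨rfl, h⟩) <;> omega

theorem neighborFinset_gu :
    (GHinge n k).neighborFinset (gu n k) =
      insert (gw n k) (Finset.univ.image fun i => pathVertex i 1) := by
  ext y
  simp only [mem_neighborFinset, Finset.mem_insert, Finset.mem_image,
    Finset.mem_univ, true_and, @eq_comm _ (pathVertex _ _)]
  induction y using vertex_induction with
  | hu => simp [gu_eq_pathVertex_iff]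
  | hw => simp [adj_gu_gw]
  | hv i' j' => simp [adj_gu_gv, gv_eq_pathVertex_iff]

theorem neighborFinset_gw :
    (GHinge n k).neighborFinset (gw n k) =
      insert (gu n k) (Finset.univ.image fun i => pathVertex i (k i - 2)) := by
  ext y
  simp only [mem_neighborFinset, Finset.mem_insert, Finset.mem_image,
    Finset.mem_univ, true_and, @eq_comm _ (pathVertex _ _)]
  induction y using vertex_induction with
  | hu => simp [adj_gu_gw.symm]
  | hw => simp [gw_eq_pathVertex_iff]; omega
  | hv i' j' =>
    have := j'.isLt
    simp [adj_gw_gv, gv_eq_pathVertex_iff]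
    omega

theorem lapMatrix_mulVec_gv (x : GHingeVertex n k → ℤ) (i : Fin n) (j : Fin (k i - 2)) :
    ((GHinge n k).lapMatrix ℤ *ᵥ x) (gv n k i j) =
      (x (gv n k i j) - x (pathVertex i j)) + (x (gv n k i j) - x (pathVertex i (j + 2))) := by
  have hj := j.isLt
  rw [lapMatrix_mulVec_apply_eq_sum, neighborFinset_gv, Finset.sum_pair]
  intro h
  have := pathVertex_injOn i (by simp; omega) (by simp; omega) h
  omega

theorem lapMatrix_mulVec_gu (hk : ∀ i, 3 ≤ k i) (x : GHingeVertex n k → ℤ) :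
    ((GHinge n k).lapMatrix ℤ *ᵥ x) (gu n k) =
      (x (gu n k) - x (gw n k)) + ∑ i, (x (gu n k) - x (pathVertex i 1)) := by
  rw [lapMatrix_mulVec_apply_eq_sum, neighborFinset_gu, Finset.sum_insert, Finset.sum_image]
  · intro i _ i' _ (h : pathVertex i 1 = pathVertex i' 1)
    have := hk i
    rw [pathVertex_eq_gv (i := i) one_pos (by omega), gv_eq_pathVertex_iff] at h
    exact h.1
  · simp only [Finset.mem_image, Finset.mem_univ, true_and, not_exists,
      @eq_comm _ (pathVertex _ _), gw_eq_pathVertex_iff]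
    intro i
    have := hk i
    omega

theorem lapMatrix_mulVec_gw (hk : ∀ i, 3 ≤ k i) (x : GHingeVertex n k → ℤ) :
    ((GHinge n k).lapMatrix ℤ *ᵥ x) (gw n k) =
      (x (gw n k) - x (gu n k)) + ∑ i, (x (gw n k) - x (pathVertex i (k i - 2))) := by
  rw [lapMatrix_mulVec_apply_eq_sum, neighborFinset_gw, Finset.sum_insert, Finset.sum_image]
  · intro i _ i' _ (h : pathVertex i (k i - 2) = pathVertex i' (k i' - 2))
    have := hk i
    rw [pathVertex_eq_gv (i := i) (by omega) (by omega), gv_eq_pathVertex_iff] at h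
    exact h.1
  · simp only [Finset.mem_image, Finset.mem_univ, true_and, not_exists,
      @eq_comm _ (pathVertex _ _), gu_eq_pathVertex_iff]
    intro i
    have := hk i
    omega

theorem lcm_add_sum_dvd_of_lapMatrix_mulVec_eq (hk : ∀ i, 3 ≤ k i) {m : ℤ}
    {x : GHingeVertex n k → ℤ}
    (hx : (GHinge n k).lapMatrix ℤ *ᵥ x = m • pointDiff (gu n k) (gw n k)) :
    ((Finset.univ.lcm (fun i => k i - 1) +
      ∑ i, Finset.univ.lcm (fun i => k i - 1) / (k i - 1) : ℕ) : ℤ) ∣ m := by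
  have harmonic (i : Fin n) (t : ℕ) (ht : t + 2 ≤ k i - 1) :
      x (pathVertex i (t + 2)) - x (pathVertex i (t + 1)) =
        x (pathVertex i (t + 1)) - x (pathVertex i t) := by
    have h := congrFun hx (gv n k i ⟨t, by omega⟩)
    rw [lapMatrix_mulVec_gv] at h
    simp only [Pi.smul_apply, pointDiff, gv_ne_gu, gv_ne_gw, if_false, sub_zero, smul_zero] at h
    rw [gv_eq_pathVertex] at h
    linarith
  have linear (i : Fin n) :
      ((k i - 1 : ℕ) : ℤ) * (x (gu n k) - x (pathVertex i 1)) = x (gu n k) - x (gw n k) := by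
    have := eq_add_nsmul_of_sub_eq_sub (f := fun t => x (pathVertex i t)) (harmonic i) _ le_rfl
    rw [pathVertex_of_le le_rfl (by have := hk i; omega), pathVertex_zero, nsmul_eq_mul] at this
    linarith
  have hu := congrFun hx (gu n k)
  rw [lapMatrix_mulVec_gu hk] at hu
  simp only [Pi.smul_apply, pointDiff, if_pos, if_neg gu_ne_gw, sub_zero, smul_eq_mul,
    mul_one] at hu
  rw [← hu]
  exact lcm_add_sum_lcm_div_dvd (fun i => by have := hk i; omega) linear

def slopePotential (b : ℤ) (c : Fin n → ℤ) : GHingeVertex n k → ℤ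
  | Sum.inl a => if a = 0 then b else 0
  | Sum.inr p => b - (p.2 + 1) * c p.1

@[simp] theorem slopePotential_gu (b : ℤ) (c : Fin n → ℤ) :
    slopePotential b c (gu n k) = b := rfl

@[simp] theorem slopePotential_gw (b : ℤ) (c : Fin n → ℤ) :
    slopePotential b c (gw n k) = 0 := rfl

theorem slopePotential_pathVertex {b : ℤ} {c : Fin n → ℤ}
    (hc : ((k i - 1 : ℕ) : ℤ) * c i = b) (ht : t ≤ k i - 1) :
    slopePotential (k := k) b c (pathVertex i t) = b - t * c i := by
  rcases Nat.eq_zero_or_pos t with rfl | ht₀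
  · simp [pathVertex_zero, gu, slopePotential]
  rcases ht.lt_or_eq with ht' | rfl
  · rw [pathVertex_eq_gv ht₀ ht']
    simp [gv, slopePotential, Nat.cast_sub ht₀]
  · simp [pathVertex_of_le le_rfl ht₀, gw, slopePotential, hc]

theorem lapMatrix_mulVec_slopePotential (hk : ∀ i, 3 ≤ k i) {b : ℤ} {c : Fin n → ℤ}
    (hc : ∀ i, ((k i - 1 : ℕ) : ℤ) * c i = b) :
    (GHinge n k).lapMatrix ℤ *ᵥ slopePotential b c =
      (b + ∑ i, c i) • pointDiff (gu n k) (gw n k) := by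
  funext v
  simp only [Pi.smul_apply, pointDiff, smul_eq_mul]
  induction v using vertex_induction with
  | hu =>
    have hterm (i : Fin n) :
        b - slopePotential (k := k) b c (pathVertex i 1) = c i := by
      rw [slopePotential_pathVertex (hc i) (by have := hk i; omega)]
      ring
    simp only [lapMatrix_mulVec_gu hk, slopePotential_gu, slopePotential_gw, hterm, if_pos,
      if_neg gu_ne_gw]
    ring
  | hw =>
    have hterm (i : Fin n) :
        0 - slopePotential (k := k) b c (pathVertex i (k i - 2)) = -c i := by
      have := hk i
      rw [slopePotential_pathVertex (hc i) (by omega), ← hc i, Nat.cast_sub (by omega),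
        Nat.cast_sub (by omega)]
      ring
    simp only [lapMatrix_mulVec_gw hk, slopePotential_gu, slopePotential_gw, hterm, if_pos,
      if_neg gw_ne_gu, Finset.sum_neg_distrib]
    ring
  | hv i j =>
    have hj := j.isLt
    rw [lapMatrix_mulVec_gv, if_neg (gv_ne_gu i j), if_neg (gv_ne_gw i j), gv_eq_pathVertex,
      slopePotential_pathVertex (hc i) (by omega), slopePotential_pathVertex (hc i) (by omega),
      slopePotential_pathVertex (hc i) (by omega)]
    push_cast
    ring

end GHinge

theorem gHinge_delta_addOrderOf_general (n : ℕ) (k : Fin n → ℕ) (hk : ∀ i, 3 ≤ k i)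
    (b : ℕ) (hb : b = Finset.univ.lcm (fun i => k i - 1)) :
    addOrderOf (divisorClass (GHinge n k)
      (pointDiff (gu n k) (gw n k)) (pointDiff_mem _ _)) =
      b + ∑ i, b / (k i - 1) := by
  set δ := divisorClass (GHinge n k) (pointDiff (gu n k) (gw n k)) (pointDiff_mem _ _)
  apply Nat.dvd_antisymm
  · apply addOrderOf_dvd_of_nsmul_eq_zero
    rw [nsmul_divisorClass_eq_zero_iff]
    refine ⟨GHinge.slopePotential b fun i => (b / (k i - 1) : ℕ), ?_⟩
    rw [GHinge.lapMatrix_mulVec_slopePotential hk fun i => ?_]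
    · push_cast
      rfl
    · exact_mod_cast Nat.mul_div_cancel' (hb ▸ Finset.dvd_lcm (Finset.mem_univ i))
  · obtain ⟨x, hx⟩ := (nsmul_divisorClass_eq_zero_iff _ _ _).1 (addOrderOf_nsmul_eq_zero δ)
    subst hb
    exact_mod_cast GHinge.lcm_add_sum_dvd_of_lapMatrix_mulVec_eq hk hx

/-- For `n ≥ 2` and `k₁, …, kₙ ≥ 3`, with `b = lcm(k₁-1, …, kₙ-1)`, the
class of the divisor `δ` (value `1` at `u`, `-1` at `w`, `0` elsewhere) in the critical
group of `H_{k₁-1,…,kₙ-1}` has additive order exactly `b + ∑ i, b / (k_i - 1)`. -/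
theorem gHinge_delta_addOrderOf (n : ℕ) (hn : 2 ≤ n) (k : Fin n → ℕ) (hk : ∀ i, 3 ≤ k i)
    (b : ℕ) (hb : b = Finset.univ.lcm (fun i => k i - 1)) :
    addOrderOf (divisorClass (GHinge n k)
      (pointDiff (gu n k) (gw n k)) (pointDiff_mem _ _)) =
      b + ∑ i, b / (k i - 1) :=
  gHinge_delta_addOrderOf_general n k hk b hb
end

section
/- Let n ≥ 2 and k_1, …, k_n ≥ 3 be integers, let b = lcm(k_1−1, …, k_n−1), and fix an index i with 1 ≤ i ≤ n. If there exists an index j ≠ i such that (k_i−1) divides (k_j−1), then the class of the divisor ε_i in the critical group K(H_{k_1−1,…,k_n−1}) has additive order exactly (k_i−1)·(b + ∑_{l=1}^n b/(k_l−1)). -/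
/-!
If `L y = t • ε_i`, then `y` is affine along each of the `n` paths from `u` to `w`, except
for a kink of size `t` at `v_{i,1}`. Comparing the drops `y w - y u` along the paths shows that
`k_l - 1` divides the drop for every `l ≠ i`, and hence so does `b`, as `k_i - 1` divides some
`k_j - 1` with `j ≠ i`; the equation at `u` then forces
`(k_i - 1) (b + ∑ b / (k_l - 1)) ∣ t`. Conversely, the potential falling by `b / (k_l - 1)` per
edge of every path, plus `b + ∑ b / (k_l - 1)` times the potential `j ↦ j - (k_i - 1)` on the
interior of path `i`, has Laplacian exactly that multiple of `ε_i`.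
-/

open Matrix

section CriticalGroup

variable {V : Type*} [Fintype V] [DecidableEq V] (G : SimpleGraph V) [DecidableRel G.Adj]

theorem mem_prin_iff {D : V → ℤ} : D ∈ Prin G ↔ ∃ x, G.lapMatrix ℤ *ᵥ x = D := Iff.rfl

theorem prin_le_div0 : Prin G ≤ Div0 V := by
  rintro _ ⟨x, rfl⟩
  change ∑ v, (G.lapMatrix ℤ *ᵥ x) v = 0
  have h := dotProduct_mulVec (fun _ => (1 : ℤ)) (G.lapMatrix ℤ) x
  rw [← mulVec_transpose, (G.isSymm_lapMatrix ℤ).eq, G.lapMatrix_mulVec_const_eq_zero,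
    zero_dotProduct] at h
  simpa [dotProduct] using h

theorem eq_of_mem_div0_of_forall_ne {D E : V → ℤ} (hD : D ∈ Div0 V) (hE : E ∈ Div0 V) (w : V)
    (h : ∀ v ≠ w, D v = E v) : D = E := by
  have hsub : ∑ v, (D - E) v = 0 := sub_mem hD hE
  rw [Finset.sum_eq_single w (fun v _ hv => by simp [h v hv]) (by simp)] at hsub
  funext v
  by_cases hv : v = w
  · subst hv
    simpa [sub_eq_zero] using hsub
  · exact h v hv

theorem zsmul_divisorClass_eq_zero_iff (D : V → ℤ) (hD : D ∈ Div0 V) (t : ℤ) :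
    t • divisorClass G D hD = 0 ↔ t • D ∈ Prin G := by
  change t • (QuotientAddGroup.mk ⟨D, hD⟩ : Div0 V ⧸ (Prin G).addSubgroupOf (Div0 V)) = 0 ↔ _
  rw [← QuotientAddGroup.mk_zsmul, QuotientAddGroup.eq_zero_iff, AddSubgroup.mem_addSubgroupOf]
  rfl

theorem addOrderOf_divisorClass_eq (D : V → ℤ) (hD : D ∈ Div0 V) {m : ℕ}
    (h : ∀ t : ℤ, t • D ∈ Prin G ↔ (m : ℤ) ∣ t) : addOrderOf (divisorClass G D hD) = m := by
  have key (t : ℤ) : (addOrderOf (divisorClass G D hD) : ℤ) ∣ t ↔ (m : ℤ) ∣ t := by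
    rw [addOrderOf_dvd_iff_zsmul_eq_zero, zsmul_divisorClass_eq_zero_iff, h]
  exact Nat.dvd_antisymm (Int.natCast_dvd_natCast.mp ((key m).mpr dvd_rfl))
    (Int.natCast_dvd_natCast.mp ((key _).mp dvd_rfl))

end CriticalGroup

theorem eq_add_mul_sub_of_sub_eq_sub {f : ℕ → ℤ} {m : ℕ}
    (h : ∀ j, j + 2 ≤ m → f (j + 2) - f (j + 1) = f (j + 1) - f j) :
    ∀ j ≤ m, f j = f 0 + j * (f 1 - f 0) := by
  have hstep : ∀ j, j + 1 ≤ m → f (j + 1) - f j = f 1 - f 0 := by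
    intro j hj
    induction j with
    | zero => rfl
    | succ j ih => rw [h j hj, ih (by omega)]
  intro j hj
  induction j with
  | zero => simp
  | succ j ih =>
    push_cast
    linear_combination ih (by omega) + hstep j hj

theorem sub_one_mul_natCast_div_sub_one {m b : ℕ} (hm : 1 ≤ m) (h : m - 1 ∣ b) :
    ((m : ℤ) - 1) * ((b / (m - 1) : ℕ) : ℤ) = b := by
  rw [← Nat.cast_pred hm]
  exact_mod_cast Nat.mul_div_cancel' h

/- `D` stands for the drop `y w - y u` of a potential `y`, and `δ l` for its first step along
path `l`. -/
theorem mul_lcm_add_sum_lcm_div_dvd {ι : Type*} [Fintype ι] [DecidableEq ι] {c : ι → ℕ}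
    (hc : ∀ l, c l ≠ 0) {i : ι} (hij : ∃ j, j ≠ i ∧ c i ∣ c j) {D t : ℤ} {δ : ι → ℤ}
    (hdrop : ∀ l, D = c l * δ l + ((c l : ℤ) - 1) * (if l = i then t else 0))
    (hu : -D - ∑ l, δ l = t) {b : ℕ} (hb : b = Finset.univ.lcm c) :
    ((c i * (b + ∑ l, b / c l) : ℕ) : ℤ) ∣ t := by
  have hq (l : ι) : (c l : ℤ) * ((b / c l : ℕ) : ℤ) = b := by
    exact_mod_cast Nat.mul_div_cancel' (hb ▸ Finset.dvd_lcm (Finset.mem_univ l))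
  set q : ι → ℤ := fun l => ((b / c l : ℕ) : ℤ)
  have hbD : (b : ℤ) ∣ D := by
    have hcD (l : ι) : (c l : ℤ) ∣ D := by
      by_cases hl : l = i
      · obtain ⟨j, hji, hdvd⟩ := hij
        subst hl
        exact (Int.natCast_dvd_natCast.mpr hdvd).trans ⟨δ j, by simpa [hji] using hdrop j⟩
      · exact ⟨δ l, by simpa [hl] using hdrop l⟩
    rw [hb, Int.ofNat_dvd_left]
    exact Finset.lcm_dvd fun l _ => Int.ofNat_dvd_left.mp (hcD l)
  obtain ⟨e, he⟩ := hbD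
  have hδ (l : ι) (hl : l ≠ i) : δ l = q l * e := by
    have := hdrop l
    rw [if_neg hl, mul_zero, add_zero, he, ← hq l, mul_assoc] at this
    exact (mul_left_cancel₀ (by exact_mod_cast hc l) this).symm
  have hsum : ∑ l, δ l = e * ∑ l, q l + (δ i - q i * e) := by
    rw [Finset.mul_sum, ← sub_eq_iff_eq_add', ← Finset.sum_sub_distrib,
      Finset.sum_eq_single i (fun l _ hl => by rw [hδ l hl]; ring) (by simp)]
    ring
  have hdi := hdrop i
  rw [if_pos rfl] at hdi
  refine ⟨-e, ?_⟩
  push_cast [q] at hsum hq ⊢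
  linear_combination -((c i : ℤ) * hu + (c i : ℤ) * hsum - hdi + ((c i : ℤ) + 1) * he - e * hq i)

/-- The `m`-th vertex of the `l`-th cycle, read as a path `u, v_{l,1}, …, v_{l,k_l-2}, w`. -/
def hingePath (n : ℕ) (k : Fin n → ℕ) (l : Fin n) (m : ℕ) : GHingeVertex n k :=
  if m = 0 then gu n k else if h : m - 1 < k l - 2 then gv n k l ⟨m - 1, h⟩ else gw n k

def hingeEpsilon (n : ℕ) (k : Fin n → ℕ) (i : Fin n) : GHingeVertex n k → ℤ :=
  pointDiff (gu n k) (hingePath n k i 1)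

def hingePotential (n : ℕ) (k : Fin n → ℕ) (i : Fin n) (b : ℕ) : GHingeVertex n k → ℤ :=
  Sum.elim ![0, -b] fun p => -((p.2 + 1 : ℕ) : ℤ) * ((b / (k p.1 - 1) : ℕ) : ℤ) +
    if p.1 = i then
      ((p.2 + 1 : ℕ) - ((k i : ℤ) - 1)) * (b + ∑ l, ((b / (k l - 1) : ℕ) : ℤ))
    else 0

section Hinge

variable {n : ℕ} {k : Fin n → ℕ}

theorem hingePath_zero (l : Fin n) : hingePath n k l 0 = gu n k := rfl

theorem hingePath_succ (l : Fin n) (j : Fin (k l - 2)) :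
    hingePath n k l (j + 1) = gv n k l j := by
  simp [hingePath]

theorem hingePath_one {l : Fin n} (hl : 3 ≤ k l) :
    hingePath n k l 1 = gv n k l ⟨0, by omega⟩ :=
  hingePath_succ l ⟨0, _⟩

theorem hingePath_last {l : Fin n} (hl : 2 ≤ k l) : hingePath n k l (k l - 1) = gw n k := by
  simp [hingePath, show k l - 1 ≠ 0 by omega, show ¬k l - 1 - 1 < k l - 2 by omega]

theorem hingePath_one_injective (hk : ∀ l, 3 ≤ k l) :
    Function.Injective fun l => hingePath n k l 1 := by
  intro l l' h
  have h : gv n k l _ = gv n k l' _ := (hingePath_one (hk l)).symm.trans (h.trans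
    (hingePath_one (hk l')))
  exact (Sigma.mk.inj_iff.mp (Sum.inr_injective h)).1

theorem gHinge_adj_gu_iff (hk : ∀ l, 3 ≤ k l) (y : GHingeVertex n k) :
    (GHinge n k).Adj (gu n k) y ↔ y = gw n k ∨ ∃ l, y = hingePath n k l 1 := by
  rcases y with a | ⟨l, j⟩
  · fin_cases a <;> simp [GHinge, gHingeRelB, gu, gw, fun l => hingePath_one (hk l), gv]
  · simp [GHinge, gHingeRelB, gu, gw, fun l => hingePath_one (hk l), gv, Fin.ext_iff (a := j)]

theorem gHinge_adj_gv_iff (l : Fin n) (j : Fin (k l - 2)) (y : GHingeVertex n k) :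
    (GHinge n k).Adj (gv n k l j) y ↔ y = hingePath n k l j ∨ y = hingePath n k l (j + 2) := by
  have := j.isLt
  simp only [GHinge, SimpleGraph.fromRel_adj, hingePath, gu, gw, gv]
  rcases y with a | ⟨l', j'⟩
  · fin_cases a <;> split_ifs <;> simp [gHingeRelB] <;> grind
  · by_cases hl : l' = l
    · subst hl
      split_ifs <;> simp [gHingeRelB, Fin.ext_iff] <;> grind
    · split_ifs <;> simp [gHingeRelB, hl, Ne.symm hl]

theorem lapMatrix_mulVec_gu (hk : ∀ l, 3 ≤ k l) (x : GHingeVertex n k → ℤ) :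
    ((GHinge n k).lapMatrix ℤ *ᵥ x) (gu n k) =
      (n + 1) * x (gu n k) - (x (gw n k) + ∑ l, x (hingePath n k l 1)) := by
  have hN : (GHinge n k).neighborFinset (gu n k) =
      insert (gw n k) (Finset.univ.image fun l => hingePath n k l 1) := by
    ext y
    simp [gHinge_adj_gu_iff hk, eq_comm]
  have hw : gw n k ∉ Finset.univ.image fun l => hingePath n k l 1 := by
    simp [fun l => hingePath_one (hk l), gv, gw]
  rw [SimpleGraph.lapMatrix_mulVec_apply, ← SimpleGraph.card_neighborFinset_eq_degree, hN,
    Finset.card_insert_of_notMem hw, Finset.sum_insert hw,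
    Finset.card_image_of_injective _ (hingePath_one_injective hk),
    Finset.sum_image fun l _ l' _ h => hingePath_one_injective hk h]
  simp

theorem lapMatrix_mulVec_gv (l : Fin n) (j : Fin (k l - 2)) (x : GHingeVertex n k → ℤ) :
    ((GHinge n k).lapMatrix ℤ *ᵥ x) (gv n k l j) =
      2 * x (gv n k l j) - (x (hingePath n k l j) + x (hingePath n k l (j + 2))) := by
  have hN : (GHinge n k).neighborFinset (gv n k l j) =
      {hingePath n k l j, hingePath n k l (j + 2)} := by
    ext y
    simp [gHinge_adj_gv_iff]
  have hne : hingePath n k l j ≠ hingePath n k l (j + 2) := by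
    simp only [hingePath]
    split_ifs <;> simp [gu, gw, gv, Fin.ext_iff] <;> omega
  rw [SimpleGraph.lapMatrix_mulVec_apply, ← SimpleGraph.card_neighborFinset_eq_degree, hN,
    Finset.card_pair hne, Finset.sum_pair hne]
  simp

theorem hingeEpsilon_gu {i : Fin n} (hi : 3 ≤ k i) : hingeEpsilon n k i (gu n k) = 1 := by
  simp [hingeEpsilon, pointDiff, hingePath_one hi, gu, gv]

theorem hingeEpsilon_gv {i : Fin n} (hi : 3 ≤ k i) (l : Fin n) (j : Fin (k l - 2)) :
    hingeEpsilon n k i (gv n k l j) = if l = i ∧ (j : ℕ) = 0 then -1 else 0 := by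
  simp only [hingeEpsilon, pointDiff, hingePath_one hi]
  by_cases h : l = i
  · subst h
    simp [gv, gu, Fin.ext_iff, apply_ite]
  · simp [gv, gu, h]

theorem gw_sub_gu_eq_of_lapMatrix_mulVec_gv {l : Fin n} (hl : 3 ≤ k l) (y : GHingeVertex n k → ℤ)
    (s : ℤ) (hs : ∀ j : Fin (k l - 2), ((GHinge n k).lapMatrix ℤ *ᵥ y) (gv n k l j) =
      if (j : ℕ) = 0 then -s else 0) :
    y (gw n k) - y (gu n k) =
      ((k l : ℤ) - 1) * (y (hingePath n k l 1) - y (gu n k)) + ((k l : ℤ) - 2) * s := by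
  have heq (j : ℕ) (hj : j + 2 ≤ k l - 1) :
      2 * y (hingePath n k l (j + 1)) - (y (hingePath n k l j) + y (hingePath n k l (j + 2))) =
        if j = 0 then -s else 0 := by
    have := hs ⟨j, by omega⟩
    rwa [lapMatrix_mulVec_gv, ← hingePath_succ] at this
  have hline := eq_add_mul_sub_of_sub_eq_sub (f := fun j => y (hingePath n k l (j + 1)))
    (m := k l - 2) (fun j hj => by have := heq (j + 1) (by omega); simp at this; linarith)
    (k l - 2) le_rfl
  have h0 := heq 0 (by omega)
  simp only [show k l - 2 + 1 = k l - 1 by omega, hingePath_last (show 2 ≤ k l by omega),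
    hingePath_zero, if_true] at hline h0
  push_cast [show 2 ≤ k l by omega] at hline
  linear_combination hline - ((k l : ℤ) - 2) * h0

theorem dvd_of_lapMatrix_mulVec_eq_zsmul_hingeEpsilon (hk : ∀ l, 3 ≤ k l) {i : Fin n}
    (hij : ∃ j, j ≠ i ∧ (k i - 1) ∣ (k j - 1)) {b : ℕ}
    (hb : b = Finset.univ.lcm fun l => k l - 1) {t : ℤ} {y : GHingeVertex n k → ℤ}
    (hy : (GHinge n k).lapMatrix ℤ *ᵥ y = t • hingeEpsilon n k i) :
    (((k i - 1) * (b + ∑ l, b / (k l - 1)) : ℕ) : ℤ) ∣ t := by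
  refine mul_lcm_add_sum_lcm_div_dvd (c := fun l => k l - 1) (fun l => by grind) hij
    (D := y (gw n k) - y (gu n k)) (δ := fun l => y (hingePath n k l 1) - y (gu n k))
    (fun l => ?_) ?_ hb
  · rw [Nat.cast_pred (by grind), sub_sub, one_add_one_eq_two]
    refine gw_sub_gu_eq_of_lapMatrix_mulVec_gv (hk l) y _ fun j => ?_
    rw [hy, Pi.smul_apply, hingeEpsilon_gv (hk i)]
    by_cases hl : l = i <;> simp [hl]
  · have := congrFun hy (gu n k)
    rw [lapMatrix_mulVec_gu hk, Pi.smul_apply, hingeEpsilon_gu (hk i)] at this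
    simp only [Finset.sum_sub_distrib, Finset.sum_const, Finset.card_univ, Fintype.card_fin,
      nsmul_eq_mul]
    linear_combination this

theorem hingePotential_hingePath (hk : ∀ l, 3 ≤ k l) (i : Fin n) {b : ℕ}
    (hb : ∀ l, (k l - 1) ∣ b) (l : Fin n) {m : ℕ} (hm : m ≤ k l - 1) :
    hingePotential n k i b (hingePath n k l m) = -(m : ℤ) * ((b / (k l - 1) : ℕ) : ℤ) +
      if l = i ∧ m ≠ 0 then
        ((m : ℤ) - ((k i : ℤ) - 1)) * (b + ∑ l, ((b / (k l - 1) : ℕ) : ℤ))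
      else 0 := by
  rcases Nat.eq_zero_or_pos m with rfl | hpos
  · simp [hingePotential, hingePath, gu]
  obtain ⟨j, rfl⟩ : ∃ j, m = j + 1 := ⟨m - 1, by omega⟩
  by_cases hj : j < k l - 2
  · have h := hingePath_succ l ⟨j, hj⟩
    simp only at h
    simp [h, hingePotential, gv]
  · rw [show j + 1 = k l - 1 by omega, hingePath_last (by grind), Nat.cast_pred (by grind)]
    by_cases hl : l = i
    · subst hl
      simp only [hingePotential, gw, Sum.elim_inl, Matrix.cons_val_one, Matrix.cons_val_fin_one,
        ne_eq, true_and, sub_self, zero_mul, ite_self, add_zero]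
      linear_combination sub_one_mul_natCast_div_sub_one (by grind) (hb l)
    · simp only [hingePotential, gw, Sum.elim_inl, Matrix.cons_val_one, Matrix.cons_val_fin_one,
        hl, false_and, if_false, add_zero]
      linear_combination sub_one_mul_natCast_div_sub_one (by grind) (hb l)

theorem lapMatrix_mulVec_hingePotential (hk : ∀ l, 3 ≤ k l) (i : Fin n) {b : ℕ}
    (hb : ∀ l, (k l - 1) ∣ b) :
    (GHinge n k).lapMatrix ℤ *ᵥ hingePotential n k i b =
      (((k i - 1) * (b + ∑ l, b / (k l - 1)) : ℕ) : ℤ) • hingeEpsilon n k i := by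
  have hx := hingePotential_hingePath hk i hb
  set B : ℤ := b + ∑ l, ((b / (k l - 1) : ℕ) : ℤ) with hB
  rw [show (((k i - 1) * (b + ∑ l, b / (k l - 1)) : ℕ) : ℤ) = ((k i : ℤ) - 1) * B by
    rw [Nat.cast_mul, Nat.cast_add, Nat.cast_sum, Nat.cast_pred (by grind)]]
  -- Both sides have degree zero, so they only need to be compared away from `w`.
  refine eq_of_mem_div0_of_forall_ne (prin_le_div0 _ ⟨_, rfl⟩)
    (zsmul_mem (pointDiff_mem _ _) _) (gw n k) fun v hv => ?_
  rcases v with a | ⟨l, j⟩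
  · obtain rfl : a = 0 := by fin_cases a <;> simp_all [gw]
    change (_ *ᵥ _) (gu n k) = ((_ : ℤ) • hingeEpsilon n k i) (gu n k)
    rw [lapMatrix_mulVec_gu hk, Pi.smul_apply, hingeEpsilon_gu (hk i),
      Finset.sum_congr rfl fun l _ => hx l (m := 1) (by grind)]
    simp [hingePotential, gu, gw, Finset.sum_add_distrib, -Int.natCast_ediv]
    linear_combination -hB
  · change (_ *ᵥ _) (gv n k l j) = ((_ : ℤ) • hingeEpsilon n k i) (gv n k l j)
    rw [lapMatrix_mulVec_gv, Pi.smul_apply, hingeEpsilon_gv (hk i), ← hingePath_succ,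
      hx _ (by omega), hx _ (by omega), hx _ (by omega)]
    by_cases hl : l = i
    · by_cases hj : (j : ℕ) = 0
      · simp [hl, hj]
        ring
      · simp [hl, hj]
        ring
    · simp [hl]
      ring

theorem zsmul_hingeEpsilon_mem_prin_iff (hk : ∀ l, 3 ≤ k l) {i : Fin n}
    (hij : ∃ j, j ≠ i ∧ (k i - 1) ∣ (k j - 1)) {b : ℕ}
    (hb : b = Finset.univ.lcm fun l => k l - 1) (t : ℤ) :
    t • hingeEpsilon n k i ∈ Prin (GHinge n k) ↔
      (((k i - 1) * (b + ∑ l, b / (k l - 1)) : ℕ) : ℤ) ∣ t := by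
  rw [mem_prin_iff]
  constructor
  · rintro ⟨y, hy⟩
    exact dvd_of_lapMatrix_mulVec_eq_zsmul_hingeEpsilon hk hij hb hy
  · rintro ⟨s, rfl⟩
    refine ⟨s • hingePotential n k i b, ?_⟩
    rw [mulVec_smul, lapMatrix_mulVec_hingePotential hk i fun l =>
      hb ▸ Finset.dvd_lcm (Finset.mem_univ l), smul_smul, mul_comm s]

end Hinge

/-- For `n ≥ 2` and `k₁, …, kₙ ≥ 3`, with `b = lcm(k₁-1, …, kₙ-1)`, and an
index `i` such that `(k_i - 1) ∣ (k_j - 1)` for some `j ≠ i`, the class of the divisor `ε_i`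
(value `1` at `u`, `-1` at `v_{i,1}`, `0` elsewhere) in the critical group of
`H_{k₁-1,…,kₙ-1}` has additive order exactly `(k_i - 1) * (b + ∑ l, b / (k_l - 1))`. -/
theorem gHinge_epsilon_addOrderOf (n : ℕ) (k : Fin n → ℕ) (hk : ∀ i, 3 ≤ k i)
    (b : ℕ) (hb : b = Finset.univ.lcm (fun i => k i - 1))
    (i : Fin n) (hij : ∃ j, j ≠ i ∧ (k i - 1) ∣ (k j - 1)) :
    addOrderOf (divisorClass (GHinge n k)
      (pointDiff (gu n k) (gv n k i ⟨0, by have := hk i; omega⟩))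
      (pointDiff_mem _ _)) =
      (k i - 1) * (b + ∑ l, b / (k l - 1)) := by
  rw [← hingePath_one (hk i)]
  exact addOrderOf_divisorClass_eq _ _ _ (zsmul_hingeEpsilon_mem_prin_iff hk hij hb)
end

section
/- Let n ≥ 2 and let a_1, …, a_n be positive integers, and let b = lcm(a_1, …, a_n). Fix an index i with 1 ≤ i ≤ n such that a_i divides lcm of the remaining values {a_j : j ≠ i}. Then the greatest common divisor of the integers b/a_j over all j ≠ i equals 1. -/
/-!
Writing `d` for the gcd of the quotients `b / a_j` over a nonempty index set `s` of divisors of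
`b`, one has `d = b / lcm_s a`: indeed `d ∣ b / a_j` means `a_j ∣ b / d`, hence
`lcm_s a ∣ b / d`. When `a_i` divides the lcm of the others, dropping `a_i` does not change the
lcm, so for `s = {j ≠ i}` the gcd is `b / b = 1`.
-/

namespace Finset

theorem lcm_erase_eq_of_dvd {ι α : Type*} [DecidableEq ι] [CommMonoidWithZero α]
    [NormalizedGCDMonoid α] {s : Finset ι} {f : ι → α} {i : ι} (hi : i ∈ s)
    (hdvd : f i ∣ (s.erase i).lcm f) : (s.erase i).lcm f = s.lcm f :=
  calc (s.erase i).lcm f = GCDMonoid.lcm (f i) ((s.erase i).lcm f) :=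
        ((lcm_eq_right_iff _ _ normalize_lcm).mpr hdvd).symm
    _ = (insert i (s.erase i)).lcm f := lcm_insert.symm
    _ = s.lcm f := by rw [insert_erase hi]

theorem gcd_div_eq_div_lcm {ι : Type*} {s : Finset ι} (hs : s.Nonempty) {f : ι → ℕ} {b : ℕ}
    (hf : ∀ j ∈ s, f j ∣ b) : s.gcd (fun j => b / f j) = b / s.lcm f := by
  have hL : s.lcm f ∣ b := lcm_dvd hf
  obtain ⟨j₀, hj₀⟩ := hs
  have hd : s.gcd (fun j => b / f j) ∣ b :=
    (gcd_dvd hj₀).trans (Nat.div_dvd_of_dvd (hf j₀ hj₀))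
  apply Nat.dvd_antisymm
  · rw [Nat.dvd_div_iff_mul_dvd hL, mul_comm, ← Nat.dvd_div_iff_mul_dvd hd]
    refine lcm_dvd fun j hj => ?_
    rw [Nat.dvd_div_iff_mul_dvd hd, mul_comm, ← Nat.dvd_div_iff_mul_dvd (hf j hj)]
    exact gcd_dvd hj
  · exact dvd_gcd fun j hj => Nat.div_dvd_div_left hL (dvd_lcm hj)

end Finset

/-- Let `n ≥ 2`, let `a₁, …, aₙ` be positive integers, and let
`b = lcm(a₁, …, aₙ)`. Fix an index `i` such that `a_i` divides the lcm of the remaining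
values `{a_j : j ≠ i}`. Then the greatest common divisor of the integers `b / a_j`
over all `j ≠ i` equals `1`. -/
theorem gcd_lcm_div_eq_one (n : ℕ) (hn : 2 ≤ n) (a : Fin n → ℕ) (ha : ∀ j, 0 < a j)
    (b : ℕ) (hb : b = Finset.univ.lcm a)
    (i : Fin n) (hi : a i ∣ (Finset.univ.erase i).lcm a) :
    (Finset.univ.erase i).gcd (fun j => b / a j) = 1 := by
  have hnonempty : (Finset.univ.erase i).Nonempty :=
    Finset.Nontrivial.erase_nonempty (Finset.one_lt_card_iff_nontrivial.mp (by simp; omega))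
  have hb_pos : 0 < b := hb ▸ Nat.pos_of_ne_zero (Finset.lcm_ne_zero_iff.mpr fun j _ => (ha j).ne')
  have hlcm : (Finset.univ.erase i).lcm a = b :=
    hb ▸ Finset.lcm_erase_eq_of_dvd (Finset.mem_univ i) hi
  rw [Finset.gcd_div_eq_div_lcm hnonempty fun j _ => hb ▸ Finset.dvd_lcm (Finset.mem_univ j),
    hlcm, Nat.div_self hb_pos]
end

section
/- Let n ≥ 1 and let a_1, …, a_n be positive integers. Then lcm(a_1, …, a_n) multiplied by the greatest common divisor of the n products ∏_{j≠i} a_j (taken over all indices 1 ≤ i ≤ n) equals the full product ∏_{i=1}^n a_i. -/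
/-!
Write `P = ∏ aᵢ`, `Qᵢ = ∏_{j ≠ i} aⱼ`, `L = lcm aᵢ` and `G = gcd Qᵢ`, so that `aᵢ Qᵢ = P` for every `i`.
Since `aᵢ ∣ L`, `P = aᵢ Qᵢ` divides `L Qᵢ` for every `i`, hence `P ∣ gcd (L Qᵢ) = L G`.
Conversely `G ∣ P`, say `P = G R`; then `G aᵢ ∣ aᵢ Qᵢ = G R` gives `aᵢ ∣ R` for every `i`,
hence `L ∣ R` and `L G ∣ P`.
-/

namespace Finset

variable {ι α : Type*} [CommMonoidWithZero α] [NormalizedGCDMonoid α] [DecidableEq ι]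
  {s : Finset ι} (f : ι → α)

theorem prod_dvd_lcm_mul_gcd_prod_erase :
    (∏ i ∈ s, f i) ∣ s.lcm f * s.gcd (fun i => ∏ j ∈ s.erase i, f j) := by
  refine dvd_trans (dvd_gcd fun i hi => ?_) (gcd_mul_left' s _ _).dvd
  rw [← mul_prod_erase s f hi]
  exact mul_dvd_mul_right (dvd_lcm hi) _

theorem lcm_mul_gcd_prod_erase_dvd_prod (hs : s.Nonempty) :
    s.lcm f * s.gcd (fun i => ∏ j ∈ s.erase i, f j) ∣ ∏ i ∈ s, f i := by
  set G := s.gcd fun i => ∏ j ∈ s.erase i, f j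
  obtain ⟨i₀, hi₀⟩ := hs
  obtain ⟨R, hR⟩ : G ∣ ∏ i ∈ s, f i := by
    rw [← mul_prod_erase s f hi₀]
    exact dvd_mul_of_dvd_right (gcd_dvd hi₀) _
  rcases eq_or_ne G 0 with hG | hG
  · simp [hR, hG]
  have hL : s.lcm f ∣ R := lcm_dvd fun i hi => by
    rw [← mul_dvd_mul_iff_left hG, ← hR, ← mul_prod_erase s f hi, mul_comm]
    exact mul_dvd_mul_left _ (gcd_dvd hi)
  rw [hR, mul_comm G]
  exact mul_dvd_mul_right hL G

theorem lcm_mul_gcd_prod_erase_associated (hs : s.Nonempty) :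
    Associated (s.lcm f * s.gcd (fun i => ∏ j ∈ s.erase i, f j)) (∏ i ∈ s, f i) :=
  associated_of_dvd_dvd (lcm_mul_gcd_prod_erase_dvd_prod f hs) (prod_dvd_lcm_mul_gcd_prod_erase f)

end Finset

theorem lcm_mul_gcd_of_complementary_products_general (n : ℕ) (hn : 1 ≤ n) (a : Fin n → ℕ) :
    Finset.univ.lcm a *
        Finset.univ.gcd (fun i => ∏ j ∈ Finset.univ.erase i, a j) =
      ∏ i, a i := by
  have : Nonempty (Fin n) := ⟨⟨0, hn⟩⟩
  exact associated_iff_eq.mp (Finset.lcm_mul_gcd_prod_erase_associated a Finset.univ_nonempty)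

/-- Let `n ≥ 1` and let `a₁, …, aₙ` be positive integers. Then
`lcm(a₁, …, aₙ)` multiplied by the gcd of the `n` products `∏_{j ≠ i} a_j` equals the
full product `∏ i, a_i`. -/
theorem lcm_mul_gcd_of_complementary_products (n : ℕ) (hn : 1 ≤ n) (a : Fin n → ℕ)
    (ha : ∀ i, 0 < a i) :
    Finset.univ.lcm a *
        Finset.univ.gcd (fun i => ∏ j ∈ Finset.univ.erase i, a j) =
      ∏ i, a i :=
  lcm_mul_gcd_of_complementary_products_general n hn a
end
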